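/- arXiv:2012.11231 — 6 statements merged into one kernel-verified Lean document; each statement's English description precedes it below -/
import Mathlib

section
/- Let F: ℕ → ℂ have Eratosthenes transform F' = F ∗ μ (Dirichlet convolution with the Möbius function). For every fixed a ∈ ℕ and every prime P ≥ a, F(a) = ∑_{d P-smooth} (F'(d)/d) · ∑_{q P-smooth, q | d} c_q(a), where the outer sum is a finite sum (only divisors d of a contribute). -/
/-!
Kluyver's formula says `c_•(a) = (e ↦ e · 1_{e ∣ a}) ∗ μ`, so convolving with `1` and using
`μ ∗ 1 = ε` gives `∑_{q ∣ d} c_q(a) = d` if `d ∣ a` and `0` otherwise. Hence the `d`-th term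
of the series is `F'(d)` for `d ∣ a` and vanishes otherwise, so the series is the finite sum
`∑_{d ∣ a} F'(d) = F(a)`.
When `a ≤ P`, every divisor of `a` and of every `P`-smooth `d` is `P`-smooth, so the smoothness
conditions on `d` and `q` cut nothing out.
-/

open scoped BigOperators Classical

/-- `n` is `P`-smooth: every prime factor of `n` is at most `P`. -/
def IsSmooth (P n : ℕ) : Prop := ∀ p : ℕ, p.Prime → p ∣ n → p ≤ P

/-- The Ramanujan sum `c_q(a)`, via Kluyver's formula. -/
noncomputable def ramanujanSum (q a : ℕ) : ℤ :=
  ∑ d ∈ (Nat.gcd a q).divisors, (d : ℤ) * ArithmeticFunction.moebius (q / d)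

/-- The Eratosthenes transform `F' = F ∗ μ` (Dirichlet convolution with Möbius). -/
noncomputable def eratosthenes (F : ℕ → ℂ) (d : ℕ) : ℂ :=
  ∑ e ∈ d.divisors, (ArithmeticFunction.moebius (d / e) : ℂ) * F e

open ArithmeticFunction ArithmeticFunction.Moebius

theorem IsSmooth.of_dvd {P m n : ℕ} (hn : IsSmooth P n) (hmn : m ∣ n) : IsSmooth P m :=
  fun p hp hpm => hn p hp (hpm.trans hmn)

theorem isSmooth_of_le {P n : ℕ} (hn : 0 < n) (hnP : n ≤ P) : IsSmooth P n :=
  fun _ _ hpn => (Nat.le_of_dvd hn hpn).trans hnP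

theorem filter_isSmooth_divisors {P d : ℕ} (hd : IsSmooth P d) :
    d.divisors.filter (IsSmooth P) = d.divisors :=
  Finset.filter_true_of_mem fun _ hq => hd.of_dvd (Nat.dvd_of_mem_divisors hq)

def dvdWeight (a : ℕ) : ArithmeticFunction ℤ :=
  ⟨fun e => if e ∣ a then (e : ℤ) else 0, by simp⟩

theorem dvdWeight_apply (a e : ℕ) : dvdWeight a e = if e ∣ a then (e : ℤ) else 0 := rfl

theorem ramanujanSum_eq_dvdWeight_mul_moebius (a : ℕ) {q : ℕ} (hq : 0 < q) :
    ramanujanSum q a = (dvdWeight a * μ) q := by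
  rw [mul_apply, Nat.sum_divisorsAntidiagonal (fun x y => dvdWeight a x * μ y), ramanujanSum]
  simp only [dvdWeight_apply, ite_mul, zero_mul, ← Finset.sum_filter]
  refine Finset.sum_congr (Finset.ext fun e => ?_) fun _ _ => rfl
  simp only [Nat.mem_divisors, Finset.mem_filter, Nat.dvd_gcd_iff, Nat.gcd_ne_zero_right hq.ne',
    hq.ne', ne_eq, not_false_eq_true, and_true]
  exact and_comm

theorem sum_divisors_ramanujanSum (a d : ℕ) :
    ∑ q ∈ d.divisors, ramanujanSum q a = if d ∣ a then (d : ℤ) else 0 := by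
  rw [Finset.sum_congr rfl fun q hq =>
      ramanujanSum_eq_dvdWeight_mul_moebius a (Nat.pos_of_mem_divisors hq),
    ← coe_mul_zeta_apply, mul_assoc, moebius_mul_coe_zeta, mul_one, dvdWeight_apply]

theorem sum_divisors_eratosthenes (F : ℕ → ℂ) {a : ℕ} (ha : 0 < a) :
    ∑ d ∈ a.divisors, eratosthenes F d = F a := by
  refine sum_eq_iff_sum_mul_moebius_eq.mpr (fun _ _ => ?_) a ha
  exact Nat.sum_divisorsAntidiagonal' (f := fun x y => (μ x : ℂ) * F y)

theorem eratosthenes_div_mul_sum_ramanujanSum (F : ℕ → ℂ) (a : ℕ) {P d : ℕ} (hd : 0 < d)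
    (hdP : IsSmooth P d) :
    eratosthenes F d / d * ∑ q ∈ d.divisors.filter (IsSmooth P), (ramanujanSum q a : ℂ) =
      if d ∣ a then eratosthenes F d else 0 := by
  have hsum : ∑ q ∈ d.divisors, (ramanujanSum q a : ℂ) = if d ∣ a then (d : ℂ) else 0 := by
    have h := sum_divisors_ramanujanSum a d
    split_ifs at h ⊢ <;> exact_mod_cast h
  rw [filter_isSmooth_divisors hdP, hsum]
  split_ifs
  · exact div_mul_cancel₀ _ (Nat.cast_ne_zero.mpr hd.ne')
  · exact mul_zero _

theorem stmt4_general (F : ℕ → ℂ) (a : ℕ) (ha : 0 < a) (P : ℕ) (haP : a ≤ P) :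
    (∀ d : ℕ, 0 < d → IsSmooth P d →
        (eratosthenes F d / d) *
          (∑ q ∈ d.divisors.filter (IsSmooth P), (ramanujanSum q a : ℂ)) ≠ 0 → d ∣ a) ∧
      F a = ∑' d : {d : ℕ // 0 < d ∧ IsSmooth P d},
        (eratosthenes F d / (d : ℕ)) *
          (∑ q ∈ (d : ℕ).divisors.filter (IsSmooth P), (ramanujanSum q a : ℂ)) := by
  refine ⟨fun d hd hdP hne => ?_, ?_⟩
  · rw [eratosthenes_div_mul_sum_ramanujanSum F a hd hdP] at hne
    exact of_not_not fun hda => hne (if_neg hda)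
  have hdiv : ∀ d ∈ a.divisors, 0 < d ∧ IsSmooth P d := fun d hd =>
    ⟨Nat.pos_of_mem_divisors hd, (isSmooth_of_le ha haP).of_dvd (Nat.dvd_of_mem_divisors hd)⟩
  rw [tsum_congr fun d => eratosthenes_div_mul_sum_ramanujanSum F a d.2.1 d.2.2,
    tsum_eq_sum (s := a.divisors.subtype _) fun d hd => if_neg fun hda =>
      hd (Finset.mem_subtype.mpr (Nat.mem_divisors.mpr ⟨hda, ha.ne'⟩)),
    Finset.sum_subtype_of_mem (fun d => if d ∣ a then eratosthenes F d else 0) hdiv,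
    ← sum_divisors_eratosthenes F ha]
  exact Finset.sum_congr rfl fun d hd => (if_pos (Nat.dvd_of_mem_divisors hd)).symm

/-- For `F : ℕ → ℂ`, fixed `a ≥ 1` and a prime `P ≥ a`:
`F(a) = ∑_{d P-smooth} (F'(d)/d) ∑_{q P-smooth, q | d} c_q(a)`, and only
divisors `d` of `a` contribute (so the outer sum is a finite sum). -/
theorem stmt4 (F : ℕ → ℂ) (a : ℕ) (ha : 0 < a) (P : ℕ) (hP : P.Prime) (haP : a ≤ P) :
    (∀ d : ℕ, 0 < d → IsSmooth P d →
        (eratosthenes F d / d) *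
          (∑ q ∈ d.divisors.filter (IsSmooth P), (ramanujanSum q a : ℂ)) ≠ 0 → d ∣ a) ∧
      F a = ∑' d : {d : ℕ // 0 < d ∧ IsSmooth P d},
        (eratosthenes F d / (d : ℕ)) *
          (∑ q ∈ (d : ℕ).divisors.filter (IsSmooth P), (ramanujanSum q a : ℂ)) :=
  stmt4_general F a ha P haP
end

section
/- (Wintner orthogonal decomposition for F') Let F: ℕ → ℂ have all Wintner coefficients Win_q F = ∑_{d ≡ 0 mod q} F'(d)/d (each series convergent). Then for every d ∈ ℕ and every prime P, F'(d) = d · ∑_{K P-smooth} μ(K) · Win_{dK} F − ∑_{r P-sifted, r > 1} F'(dr)/r, where the last series converges (as the limit of its partial sums up to x). -/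
/-! Let `P#` be the primorial of `P`. The `P`-smooth `K` with `μ(K) ≠ 0` are exactly the divisors
of `P#`, and `∑_{K ∣ P#, K ∣ r} μ(K) = ∑_{K ∣ gcd(P#, r)} μ(K)` is the indicator of `r` being
`P`-sifted. Taking the finite combination `∑_{K ∣ P#} μ(K)` of the partial sums of `W(dK)` up to
`dy` and substituting `m = dr` therefore gives the partial sums of `∑_{r P-sifted} F'(dr)/(dr)`;
so `d ∑_K μ(K) W(dK)` is the sum of `∑_{r P-sifted} F'(dr)/r`, whose term `r = 1` is `F'(d)`. -/

open scoped BigOperators Classical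
open Filter

/-- `n` is `P`-sifted: every prime factor of `n` exceeds `P`. -/
def IsSifted (P n : ℕ) : Prop := ∀ p : ℕ, p.Prime → p ∣ n → P < p

open ArithmeticFunction Finset
open scoped ArithmeticFunction.Moebius

theorem sum_divisors_moebius (R : Type*) [Ring R] (n : ℕ) :
    ∑ k ∈ n.divisors, (μ k : R) = if n = 1 then 1 else 0 := by
  have h := congrArg (· n) (coe_moebius_mul_coe_zeta (R := R))
  simpa only [coe_mul_zeta_apply, intCoe_apply, one_apply] using h

theorem IsSmooth.of_dvd_primorial {P K : ℕ} (h : K ∣ primorial P) : IsSmooth P K :=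
  fun _ hp hpK => hp.dvd_primorial_iff.mp (hpK.trans h)

theorem Squarefree.dvd_primorial_of_isSmooth {P K : ℕ} (hK : Squarefree K)
    (hs : IsSmooth P K) : K ∣ primorial P := by
  rw [← Nat.prod_primeFactors_of_squarefree hK,
    Nat.prod_primeFactors_dvd_iff (primorial_ne_zero P), primeFactors_primorial]
  intro p hp
  have hp' := Nat.mem_primeFactors.mp hp
  exact Nat.mem_primesLE.mpr ⟨hs p hp'.1 hp'.2.1, hp'.1⟩

theorem coprime_primorial_iff_isSifted (P r : ℕ) :
    Nat.Coprime (primorial P) r ↔ IsSifted P r := by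
  rw [← not_iff_not, Nat.Prime.not_coprime_iff_dvd]
  simp only [IsSifted, not_forall, not_lt, exists_prop]
  refine exists_congr fun p => ?_
  constructor
  · rintro ⟨hp, hpN, hpr⟩
    exact ⟨hp, hpr, hp.dvd_primorial_iff.mp hpN⟩
  · rintro ⟨hp, hpr, hpP⟩
    exact ⟨hp, hp.dvd_primorial_iff.mpr hpP, hpr⟩

theorem sum_divisors_primorial_moebius_dvd (R : Type*) [Ring R] (P r : ℕ) :
    ∑ K ∈ (primorial P).divisors, (if K ∣ r then (μ K : R) else 0) =
      if IsSifted P r then 1 else 0 := by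
  have hfilter : {K ∈ (primorial P).divisors | K ∣ r} = (Nat.gcd (primorial P) r).divisors := by
    rw [← Nat.divisors_filter_dvd_of_dvd (primorial_ne_zero P) (Nat.gcd_dvd_left _ _)]
    ext K
    simp +contextual [Nat.dvd_gcd_iff]
  simp only [← sum_filter, hfilter, sum_divisors_moebius, ← Nat.coprime_iff_gcd_eq_one,
    coprime_primorial_iff_isSifted]

theorem tsum_moebius_smooth_eq_sum_divisors_primorial {R : Type*} [Ring R] [TopologicalSpace R]
    (P : ℕ) (f : ℕ → R) :
    ∑' K : {K : ℕ // 0 < K ∧ IsSmooth P K}, (μ (K : ℕ) : R) * f K =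
      ∑ K ∈ (primorial P).divisors, (μ K : R) * f K := by
  refine (tsum_subtype {K : ℕ | 0 < K ∧ IsSmooth P K} fun K => (μ K : R) * f K).trans ?_
  rw [tsum_eq_sum (s := (primorial P).divisors)]
  · refine sum_congr rfl fun K hK => Set.indicator_of_mem ?_ _
    exact ⟨Nat.pos_of_mem_divisors hK, .of_dvd_primorial (Nat.dvd_of_mem_divisors hK)⟩
  · intro K hK
    by_cases hsf : Squarefree K
    · refine Set.indicator_of_notMem (fun hK' => hK ?_) _
      exact Nat.mem_divisors.mpr ⟨hsf.dvd_primorial_of_isSmooth hK'.2, primorial_ne_zero P⟩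
    · simp [Set.indicator_apply, moebius_eq_zero_of_not_squarefree hsf]

theorem sum_Icc_mul_dvd_mul {M : Type*} [AddCommMonoid M] (a : ℕ → M) {d : ℕ} (hd : 0 < d)
    (k y : ℕ) :
    ∑ m ∈ Icc 1 (d * y), (if d * k ∣ m then a m else 0) =
      ∑ r ∈ Icc 1 y, if k ∣ r then a (d * r) else 0 := by
  have himage : {m ∈ Icc 1 (d * y) | d * k ∣ m} = image (d * ·) {r ∈ Icc 1 y | k ∣ r} := by
    ext m
    simp only [mem_filter, mem_Icc, mem_image]
    constructor
    · rintro ⟨⟨h1, h2⟩, hm⟩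
      obtain ⟨r, rfl⟩ := (dvd_mul_right d k).trans hm
      refine ⟨r, ⟨⟨by nlinarith, Nat.le_of_mul_le_mul_left h2 hd⟩, ?_⟩, rfl⟩
      exact (Nat.mul_dvd_mul_iff_left hd).mp hm
    · rintro ⟨r, ⟨⟨h1, h2⟩, hkr⟩, rfl⟩
      exact ⟨⟨by nlinarith, Nat.mul_le_mul_left d h2⟩, Nat.mul_dvd_mul_left d hkr⟩
  rw [← sum_filter, ← sum_filter, himage,
    sum_image fun _ _ _ _ h => Nat.eq_of_mul_eq_mul_left hd h]

theorem sum_divisors_primorial_moebius_mul_sum_Icc {R : Type*} [CommRing R] (a : ℕ → R)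
    {d : ℕ} (hd : 0 < d) (P y : ℕ) :
    ∑ K ∈ (primorial P).divisors, (μ K : R) * ∑ m ∈ Icc 1 (d * y), (if d * K ∣ m then a m else 0) =
      ∑ r ∈ Icc 1 y, if IsSifted P r then a (d * r) else 0 := by
  simp_rw [sum_Icc_mul_dvd_mul a hd, mul_sum]
  rw [sum_comm]
  refine sum_congr rfl fun r _ => ?_
  calc ∑ K ∈ (primorial P).divisors, (μ K : R) * (if K ∣ r then a (d * r) else 0)
      = (∑ K ∈ (primorial P).divisors, if K ∣ r then (μ K : R) else 0) * a (d * r) := by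
        rw [sum_mul]
        exact sum_congr rfl fun K _ => by split_ifs <;> simp
    _ = if IsSifted P r then a (d * r) else 0 := by
        rw [sum_divisors_primorial_moebius_dvd, ite_mul, one_mul, zero_mul]

theorem isSifted_one (P : ℕ) : IsSifted P 1 :=
  fun _ hp h => absurd h hp.not_dvd_one

theorem sum_Icc_two_eq_sum_Icc_one_sub {G : Type*} [AddCommGroup G] (f : ℕ → G) {x : ℕ}
    (hx : 1 ≤ x) : ∑ r ∈ Icc 2 x, f r = ∑ r ∈ Icc 1 x, f r - f 1 := by
  rw [← insert_Icc_add_one_left_eq_Icc hx, sum_insert (by simp), add_sub_cancel_left]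
  rfl

theorem stmt7_general (F : ℕ → ℂ) (W : ℕ → ℂ)
    (hW : ∀ q : ℕ, 0 < q →
      Tendsto (fun x : ℕ => ∑ d ∈ Finset.Icc 1 x, if q ∣ d then eratosthenes F d / d else 0)
        atTop (nhds (W q)))
    (d : ℕ) (hd : 0 < d) (P : ℕ) :
    ∃ L : ℂ,
      Tendsto
        (fun x : ℕ =>
          ∑ r ∈ Finset.Icc 2 x, if IsSifted P r then eratosthenes F (d * r) / r else 0)
        atTop (nhds L) ∧
      eratosthenes F d =
        (d : ℂ) * (∑' K : {K : ℕ // 0 < K ∧ IsSmooth P K},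
            (ArithmeticFunction.moebius (K : ℕ) : ℂ) * W (d * K)) - L := by
  set T := ∑ K ∈ (primorial P).divisors, (μ K : ℂ) * W (d * K)
  have hcombination : Tendsto (fun y : ℕ => (d : ℂ) * ∑ K ∈ (primorial P).divisors, (μ K : ℂ) *
      ∑ m ∈ Icc 1 (d * y), if d * K ∣ m then eratosthenes F m / m else 0)
      atTop (nhds (d * T)) := by
    refine (tendsto_finsetSum _ fun K hK => .const_mul _ ?_).const_mul _
    exact (hW _ (Nat.mul_pos hd (Nat.pos_of_mem_divisors hK))).comp
      (tendsto_id.const_mul_atTop' hd)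
  have hsifted : Tendsto (fun y : ℕ =>
      ∑ r ∈ Icc 1 y, if IsSifted P r then eratosthenes F (d * r) / r else 0)
      atTop (nhds (d * T)) := by
    refine hcombination.congr fun y => ?_
    rw [sum_divisors_primorial_moebius_mul_sum_Icc _ hd, mul_sum]
    refine sum_congr rfl fun r _ => ?_
    split_ifs
    · rw [Nat.cast_mul, ← mul_div_assoc, mul_div_mul_left _ _ (by exact_mod_cast hd.ne')]
    · simp
  refine ⟨d * T - eratosthenes F d, ?_, ?_⟩
  · refine (hsifted.sub_const _).congr' ?_
    filter_upwards [eventually_ge_atTop 1] with x hx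
    rw [sum_Icc_two_eq_sum_Icc_one_sub _ hx]
    simp [isSifted_one]
  · rw [tsum_moebius_smooth_eq_sum_divisors_primorial P fun K => W (d * K)]
    ring

/-- (Wintner orthogonal decomposition for `F'`.) If all Wintner coefficients
`W q = ∑_{d ≡ 0 mod q} F'(d)/d` exist (as limits of partial sums), then for every
`d ≥ 1` and every prime `P`, the irregular series `∑_{r P-sifted, r>1} F'(dr)/r`
converges, to a limit `L` with `F'(d) = d ∑_{K P-smooth} μ(K) W(dK) − L`. -/
theorem stmt7 (F : ℕ → ℂ) (W : ℕ → ℂ)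
    (hW : ∀ q : ℕ, 0 < q →
      Tendsto (fun x : ℕ => ∑ d ∈ Finset.Icc 1 x, if q ∣ d then eratosthenes F d / d else 0)
        atTop (nhds (W q)))
    (d : ℕ) (hd : 0 < d) (P : ℕ) (hP : P.Prime) :
    ∃ L : ℂ,
      Tendsto
        (fun x : ℕ =>
          ∑ r ∈ Finset.Icc 2 x, if IsSifted P r then eratosthenes F (d * r) / r else 0)
        atTop (nhds L) ∧
      eratosthenes F d =
        (d : ℂ) * (∑' K : {K : ℕ // 0 < K ∧ IsSmooth P K},
            (ArithmeticFunction.moebius (K : ℕ) : ℂ) * W (d * K)) - L :=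
  stmt7_general F W hW d hd P
end

section
/- Let F: ℕ → ℂ satisfy the Wintner Assumption ∑_d |F'(d)|/d < ∞. Then for every fixed d ∈ ℕ, the irregular series tends to zero: lim_{P→∞, P prime} ∑_{r P-sifted, r > 1} F'(dr)/r = 0. -/
open scoped BigOperators Classical
open Filter

/-!
The `r`-th term of the irregular series vanishes as soon as `P ≥ r`, and every term is bounded
by `|F'(dr)|/r = d · |F'(dr)|/(dr)`, which is summable in `r` by the Wintner Assumption.
Tannery's theorem (dominated convergence for series) therefore lets the limit pass inside the sum.
-/

theorem IsSifted.lt_of_one_lt {P n : ℕ} (h : IsSifted P n) (hn : 1 < n) : P < n :=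
  (h _ (Nat.minFac_prime hn.ne') n.minFac_dvd).trans_le (Nat.minFac_le (by omega))

theorem summable_norm_comp_mul_div {E : Type*} [SeminormedAddCommGroup E] {a : ℕ → E}
    (ha : Summable fun n : ℕ => ‖a n‖ / n) {d : ℕ} (hd : d ≠ 0) :
    Summable fun r : ℕ => ‖a (d * r)‖ / r := by
  refine ((ha.comp_injective (mul_right_injective₀ hd)).mul_left (d : ℝ)).congr fun r => ?_
  have hd' : (d : ℝ) ≠ 0 := Nat.cast_ne_zero.mpr hd
  simp only [Function.comp_apply, Nat.cast_mul, ← mul_div_assoc, mul_div_mul_left _ _ hd']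

/-- Under the Wintner Assumption `∑_d |F'(d)|/d < ∞`, for every fixed `d ≥ 1`
the irregular series tends to zero:
`lim_{P→∞ prime} ∑_{r P-sifted, r>1} F'(dr)/r = 0`. -/
theorem stmt10 (F : ℕ → ℂ)
    (hWA : Summable (fun d : ℕ => ‖eratosthenes F d‖ / d))
    (d : ℕ) (hd : 0 < d) :
    Tendsto
      (fun P : ℕ => ∑' r : ℕ, if 1 < r ∧ IsSifted P r then eratosthenes F (d * r) / r else 0)
      (atTop ⊓ Filter.principal {P : ℕ | P.Prime}) (nhds 0) := by
  have hterm (r : ℕ) : Tendsto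
      (fun P : ℕ => if 1 < r ∧ IsSifted P r then eratosthenes F (d * r) / r else 0)
      atTop (nhds 0) :=
    tendsto_const_nhds.congr' <| (eventually_ge_atTop r).mono fun P hP =>
      (if_neg fun h => (h.2.lt_of_one_lt h.1).not_ge hP).symm
  have hbound (P r : ℕ) :
      ‖if 1 < r ∧ IsSifted P r then eratosthenes F (d * r) / r else 0‖ ≤
        ‖eratosthenes F (d * r)‖ / r := by
    split_ifs
    · rw [norm_div, Complex.norm_natCast]
    · rw [norm_zero]; positivity
  have hlim := tendsto_tsum_of_dominated_convergence (summable_norm_comp_mul_div hWA hd.ne')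
    hterm (Eventually.of_forall hbound)
  rw [tsum_zero] at hlim
  exact hlim.mono_left inf_le_left
end

section
/- (Carmichael coefficients of an imaginary exponential) Fix q ∈ ℕ and j with gcd(j,q) = 1. Then for every ℓ ∈ ℕ, the Carmichael coefficient of the function a ↦ e^{2πi j a / q} equals 1/φ(q) if ℓ = q and 0 otherwise; i.e. (1/φ(ℓ)) · lim_{x→∞} (1/x) ∑_{a ≤ x} e^{2πi j a / q} c_ℓ(a) = 1_{ℓ = q} / φ(q), and in particular the limit exists. -/
/-!
Kluyver's formula gives `c_ℓ(a) = ∑_{d ∣ ℓ, d ∣ a} d μ(ℓ/d)`, so the average of `z^a c_ℓ(a)` over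
`a ≤ x` splits, for each `d ∣ ℓ`, into `d μ(ℓ/d)` times an average of the geometric sum
`∑_{m ≤ x/d} (z^d)^m`. For `z = e^{2πij/q}`, a primitive `q`-th root of unity since `gcd(j, q) = 1`,
`z^d = 1` exactly when `q ∣ d`, and then the average tends to `1/d`; otherwise the partial sums are
bounded and the average tends to `0`. The limit is therefore `∑_{q ∣ d ∣ ℓ} μ(ℓ/d)`, which is
`[ℓ = q]` by Möbius inversion of `[q ∣ n] = ∑_{i ∣ n} [i = q]`.
-/

open scoped BigOperators
open Filter

open Finset ArithmeticFunction
open scoped ArithmeticFunction.Moebius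

theorem ramanujanSum_eq_sum_divisors {ℓ : ℕ} (hℓ : ℓ ≠ 0) (a : ℕ) :
    ramanujanSum ℓ a = ∑ d ∈ ℓ.divisors, if d ∣ a then (d : ℤ) * μ (ℓ / d) else 0 := by
  rw [ramanujanSum, ← Nat.divisors_filter_dvd_of_dvd hℓ (Nat.gcd_dvd_right a ℓ), sum_filter]
  refine sum_congr rfl fun d hd => ?_
  simp [Nat.dvd_gcd_iff, Nat.dvd_of_mem_divisors hd]

theorem sum_divisors_ite_dvd_moebius_div {R : Type*} [NonAssocRing R] {q ℓ : ℕ} (hℓ : 0 < ℓ) :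
    ∑ d ∈ ℓ.divisors, (if q ∣ d then (μ (ℓ / d) : R) else 0) = if ℓ = q then 1 else 0 := by
  have h := (sum_eq_iff_sum_mul_moebius_eq (R := R) (f := fun n => if n = q then 1 else 0)
    (g := fun n => if q ∣ n then 1 else 0)).1 (fun n hn => by
      simp [sum_ite_eq', Nat.mem_divisors, hn.ne']) ℓ hℓ
  rw [Nat.sum_divisorsAntidiagonal' (fun a b => (μ a : R) * if q ∣ b then 1 else 0)] at h
  simpa [mul_ite] using h

theorem sum_Icc_filter_dvd {M : Type*} [AddCommMonoid M] {d : ℕ} (hd : 0 < d) (x : ℕ)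
    (f : ℕ → M) : ∑ a ∈ Icc 1 x with d ∣ a, f a = ∑ m ∈ Icc 1 (x / d), f (d * m) := by
  refine sum_nbij' (· / d) (d * ·) ?_ ?_ ?_ ?_ ?_ <;> intro a ha <;>
    simp only [mem_filter, mem_Icc] at ha ⊢
  · obtain ⟨⟨h1, h2⟩, m, rfl⟩ := ha
    rw [Nat.mul_div_cancel_left m hd, Nat.le_div_iff_mul_le hd]
    exact ⟨Nat.pos_of_mul_pos_left h1, by linarith⟩
  · rw [Nat.le_div_iff_mul_le hd] at ha
    exact ⟨⟨Nat.mul_pos hd ha.1, by linarith⟩, dvd_mul_right d a⟩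
  · exact Nat.mul_div_cancel' ha.2
  · exact Nat.mul_div_cancel_left a hd
  · rw [Nat.mul_div_cancel' ha.2]

theorem norm_sum_Icc_pow_le {K : Type*} [NormedDivisionRing K] {w : K} (hw : ‖w‖ = 1) (hw1 : w ≠ 1) (N : ℕ) :
    ‖∑ m ∈ Icc 1 N, w ^ m‖ ≤ 2 / ‖w - 1‖ := by
  rw [← Ico_add_one_right_eq_Icc, geom_sum_Ico hw1 (by omega), norm_div]
  gcongr
  calc ‖w ^ (N + 1) - w ^ 1‖ ≤ ‖w ^ (N + 1)‖ + ‖w ^ 1‖ := norm_sub_le _ _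
    _ = 2 := by simp [hw]; norm_num

theorem tendsto_one_div_mul_of_norm_le {S : ℕ → ℂ} {C : ℝ} (hS : ∀ n, ‖S n‖ ≤ C) (f : ℕ → ℕ) :
    Tendsto (fun x : ℕ => (1 / (x : ℂ)) * S (f x)) atTop (nhds 0) := by
  refine squeeze_zero_norm (fun x => ?_) (tendsto_const_div_atTop_nhds_zero_nat C)
  rw [norm_mul, one_div, norm_inv, Complex.norm_natCast, ← div_eq_inv_mul]
  exact div_le_div_of_nonneg_right (hS _) x.cast_nonneg

theorem tendsto_one_div_mul_natCast_div (d : ℕ) :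
    Tendsto (fun x : ℕ => (1 / (x : ℂ)) * ((x / d : ℕ) : ℂ)) atTop (nhds (1 / (d : ℂ))) := by
  have h := (tendsto_nat_floor_mul_div_atTop (R := ℝ) (a := 1 / d) (by positivity)).comp
    tendsto_natCast_atTop_atTop
  have := (Complex.continuous_ofReal.tendsto _).comp h
  refine (this.congr fun x => ?_).trans_eq (by push_cast; rfl)
  simp only [Function.comp_apply, one_div_mul_eq_div, Nat.floor_div_eq_div]
  push_cast
  ring

theorem tendsto_one_div_mul_sum_Icc_pow {w : ℂ} (hw : ‖w‖ = 1) (d : ℕ) :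
    Tendsto (fun x : ℕ => (1 / (x : ℂ)) * ∑ m ∈ Icc 1 (x / d), w ^ m) atTop
      (nhds (if w = 1 then 1 / (d : ℂ) else 0)) := by
  split_ifs with hw1
  · simpa [hw1] using tendsto_one_div_mul_natCast_div d
  · exact tendsto_one_div_mul_of_norm_le (norm_sum_Icc_pow_le hw hw1) (· / d)

theorem sum_pow_mul_ramanujanSum {ℓ : ℕ} (hℓ : ℓ ≠ 0) (z : ℂ) (x : ℕ) :
    ∑ a ∈ Icc 1 x, z ^ a * (ramanujanSum ℓ a : ℂ) =
      ∑ d ∈ ℓ.divisors, (d * μ (ℓ / d) : ℂ) * ∑ m ∈ Icc 1 (x / d), (z ^ d) ^ m := by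
  simp_rw [ramanujanSum_eq_sum_divisors hℓ, Int.cast_sum, mul_sum, apply_ite Int.cast,
    Int.cast_zero, mul_ite, mul_zero]
  rw [sum_comm]
  refine sum_congr rfl fun d hd => ?_
  rw [← sum_filter, sum_Icc_filter_dvd (Nat.pos_of_mem_divisors hd)]
  refine sum_congr rfl fun m _ => ?_
  push_cast
  ring

theorem tendsto_one_div_mul_sum_pow_mul_ramanujanSum {q ℓ : ℕ} (hq : q ≠ 0) (hℓ : 0 < ℓ) {z : ℂ}
    (hz : IsPrimitiveRoot z q) :
    Tendsto (fun x : ℕ => (1 / (x : ℂ)) * ∑ a ∈ Icc 1 x, z ^ a * (ramanujanSum ℓ a : ℂ))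
      atTop (nhds (if ℓ = q then 1 else 0)) := by
  have h_expand (x : ℕ) : (1 / (x : ℂ)) * ∑ a ∈ Icc 1 x, z ^ a * (ramanujanSum ℓ a : ℂ) =
      ∑ d ∈ ℓ.divisors, (d * μ (ℓ / d) : ℂ) * ((1 / x) * ∑ m ∈ Icc 1 (x / d), (z ^ d) ^ m) := by
    rw [sum_pow_mul_ramanujanSum hℓ.ne', mul_sum]
    exact sum_congr rfl fun _ _ => mul_left_comm ..
  simp_rw [h_expand]
  rw [← sum_divisors_ite_dvd_moebius_div hℓ]
  refine tendsto_finsetSum _ fun d hd => ?_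
  have hd0 : (d : ℂ) ≠ 0 := Nat.cast_ne_zero.2 (Nat.pos_of_mem_divisors hd).ne'
  have hzd : ‖z ^ d‖ = 1 := by rw [norm_pow, hz.norm'_eq_one hq, one_pow]
  convert (tendsto_one_div_mul_sum_Icc_pow hzd d).const_mul (d * μ (ℓ / d) : ℂ) using 1
  simp_rw [hz.pow_eq_one_iff_dvd]
  congr 1
  split_ifs
  · field_simp
  · rw [mul_zero]

/-- (Carmichael coefficients of an imaginary exponential.) Fix `q ≥ 1` and `j`
coprime to `q`. For every `ℓ ≥ 1`, the Carmichael `ℓ`-th coefficient of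
`a ↦ e^{2πi j a / q}` exists and equals `1_{ℓ = q} / φ(q)`. -/
theorem stmt15 (q : ℕ) (hq : 0 < q) (j : ℕ) (hj : Nat.Coprime j q)
    (ℓ : ℕ) (hℓ : 0 < ℓ) :
    Tendsto
      (fun x : ℕ =>
        (1 / (Nat.totient ℓ : ℂ)) * ((1 / (x : ℂ)) *
          ∑ a ∈ Finset.Icc 1 x,
            Complex.exp (2 * Real.pi * Complex.I * j * a / q) * (ramanujanSum ℓ a : ℂ)))
      atTop (nhds (if ℓ = q then 1 / (Nat.totient q : ℂ) else 0)) := by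
  set ζ := Complex.exp (2 * Real.pi * Complex.I / q)
  have hζj : IsPrimitiveRoot (ζ ^ j) q :=
    (Complex.isPrimitiveRoot_exp q hq.ne').pow_of_coprime j hj
  have h_exp (a : ℕ) : Complex.exp (2 * Real.pi * Complex.I * j * a / q) = (ζ ^ j) ^ a := by
    rw [← pow_mul, ← Complex.exp_nat_mul]
    congr 1
    push_cast
    ring
  simp_rw [h_exp]
  convert (tendsto_one_div_mul_sum_pow_mul_ramanujanSum hq.ne' hℓ hζj).const_mul
    (1 / (Nat.totient ℓ : ℂ)) using 2
  split_ifs with h <;> simp [h]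
end

section
/- (Absorbing extra factors in Ramanujan sums) For all ℓ, b, t ∈ ℕ: c_ℓ(bt) = (φ(ℓ)/φ(ℓ/gcd(ℓ,b))) · c_{ℓ/gcd(ℓ,b)}(t). -/
/-!
Hölder's formula `c_q(a) = φ(q) μ(m) / φ(m)` with `m = q / gcd(a, q)` shows that `c_q(a)`
depends on `a` only through `m`. Kluyver's sum is the Dirichlet convolution of the multiplicative
functions `d ↦ d·[d ∣ a]` and `μ`, so `c_q(a)` is multiplicative in `q` and Hölder's formula
reduces to prime powers, where at most the two top divisors contribute. Finally, with
`ℓ' = ℓ / gcd(ℓ, b)` one has `gcd(bt, ℓ) = gcd(ℓ, b) · gcd(t, ℓ')`, so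
`ℓ / gcd(bt, ℓ) = ℓ' / gcd(t, ℓ')` and both sides of the identity carry the same `m`.
-/

open scoped BigOperators

open ArithmeticFunction
open scoped ArithmeticFunction.Moebius

noncomputable def idOnDivisors (a : ℕ) : ArithmeticFunction ℤ :=
  ⟨fun d => if d ∣ a then (d : ℤ) else 0, by simp⟩

lemma idOnDivisors_apply (a d : ℕ) : idOnDivisors a d = if d ∣ a then (d : ℤ) else 0 := rfl

lemma isMultiplicative_idOnDivisors (a : ℕ) : (idOnDivisors a).IsMultiplicative := by
  refine ⟨by simp [idOnDivisors_apply], fun {m n} hmn => ?_⟩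
  have hdvd : m * n ∣ a ↔ m ∣ a ∧ n ∣ a :=
    ⟨fun h => ⟨dvd_of_mul_right_dvd h, dvd_of_mul_left_dvd h⟩,
      fun h => hmn.mul_dvd_of_dvd_of_dvd h.1 h.2⟩
  simp only [idOnDivisors_apply, hdvd]
  split_ifs <;> simp_all

lemma ramanujanSum_eq_mul_apply (q a : ℕ) :
    ramanujanSum q a = (idOnDivisors a * μ) q := by
  rcases eq_or_ne q 0 with rfl | hq
  · simp [ramanujanSum]
  have hdivisors : (Nat.gcd a q).divisors = q.divisors.filter (· ∣ a) := by
    ext d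
    simp only [Nat.mem_divisors, Finset.mem_filter, Nat.dvd_gcd_iff, ne_eq, Nat.gcd_eq_zero_iff]
    tauto
  rw [mul_apply, Nat.sum_divisorsAntidiagonal (fun x y => idOnDivisors a x * μ y), ramanujanSum,
    hdivisors, Finset.sum_filter]
  refine Finset.sum_congr rfl fun d _ => ?_
  rw [idOnDivisors_apply]
  split_ifs <;> simp

lemma ramanujanSum_zero_left (a : ℕ) : ramanujanSum 0 a = 0 := by
  rw [ramanujanSum_eq_mul_apply, ArithmeticFunction.map_zero]

lemma ramanujanSum_mul_of_coprime (a : ℕ) {q₁ q₂ : ℕ} (h : Nat.Coprime q₁ q₂) :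
    ramanujanSum (q₁ * q₂) a = ramanujanSum q₁ a * ramanujanSum q₂ a := by
  simp only [ramanujanSum_eq_mul_apply]
  exact ((isMultiplicative_idOnDivisors a).mul isMultiplicative_moebius).map_mul_of_coprime h

lemma sum_divisors_mul_moebius_div_eq_totient (n : ℕ) :
    ∑ d ∈ n.divisors, (d : ℤ) * μ (n / d) = Nat.totient n := by
  rcases Nat.eq_zero_or_pos n with rfl | hn
  · simp
  have inversion :=
    (sum_eq_iff_sum_mul_moebius_eq (f := fun m => (Nat.totient m : ℤ))
      (g := fun m => (m : ℤ))).1 (fun m _ => by exact_mod_cast Nat.sum_totient m) n hn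
  simp only [Int.cast_id] at inversion
  rw [Nat.sum_divisorsAntidiagonal' (fun x y => μ x * (y : ℤ))] at inversion
  rw [← inversion]
  exact Finset.sum_congr rfl fun d _ => mul_comm _ _

lemma ramanujanSum_of_dvd {q a : ℕ} (h : q ∣ a) : ramanujanSum q a = Nat.totient q := by
  rw [ramanujanSum, Nat.gcd_eq_right h, sum_divisors_mul_moebius_div_eq_totient]

lemma moebius_prime_pow_eq_zero {p e : ℕ} (hp : p.Prime) (he : 2 ≤ e) : μ (p ^ e) = 0 := by
  rw [moebius_apply_prime_pow hp (by omega), if_neg (by omega)]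

lemma ramanujanSum_prime_pow_mul_totient {p k m a : ℕ} (hp : p.Prime) (hmk : m ≤ k)
    (hg : Nat.gcd a (p ^ k) = p ^ m) :
    ramanujanSum (p ^ k) a * Nat.totient (p ^ (k - m)) =
      Nat.totient (p ^ k) * μ (p ^ (k - m)) := by
  obtain rfl | hlt := hmk.eq_or_lt
  · rw [ramanujanSum_of_dvd (Nat.gcd_eq_right_iff_dvd.1 hg)]
    simp
  have hsum : ramanujanSum (p ^ k) a =
      ∑ j ∈ Finset.range (m + 1), (p ^ j : ℤ) * μ (p ^ (k - j)) := by
    rw [ramanujanSum, hg, Nat.sum_divisors_prime_pow hp]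
    refine Finset.sum_congr rfl fun j hj => ?_
    rw [Nat.pow_div (by simp at hj; omega) hp.pos]
    push_cast; rfl
  have hlow : ∀ j < m, μ (p ^ (k - j)) = 0 := fun j hj => moebius_prime_pow_eq_zero hp (by omega)
  rw [hsum, Finset.sum_range_succ, Finset.sum_eq_zero fun j hj => by
    rw [hlow j (Finset.mem_range.1 hj), mul_zero], zero_add]
  obtain rfl | htop : k = m + 1 ∨ m + 2 ≤ k := by omega
  · rw [Nat.add_sub_cancel_left, pow_one, moebius_apply_prime hp, Nat.totient_prime hp,
      Nat.totient_prime_pow_succ hp]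
    push_cast
    ring
  · rw [moebius_prime_pow_eq_zero hp (by omega)]
    ring

theorem ramanujanSum_mul_totient (a q : ℕ) :
    ramanujanSum q a * Nat.totient (q / Nat.gcd a q) =
      Nat.totient q * μ (q / Nat.gcd a q) := by
  induction q using Nat.recOnPrimeCoprime with
  | zero => simp
  | prime_pow p k hp =>
    obtain ⟨m, hmk, hg⟩ := (Nat.dvd_prime_pow hp).1 (Nat.gcd_dvd_right a (p ^ k))
    rw [hg, Nat.pow_div hmk hp.pos]
    exact ramanujanSum_prime_pow_mul_totient hp hmk hg
  | coprime q₁ q₂ _ _ hco ih₁ ih₂ =>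
    have hd₁ := Nat.gcd_dvd_right a q₁
    have hd₂ := Nat.gcd_dvd_right a q₂
    have hdiv :
        q₁ * q₂ / Nat.gcd a (q₁ * q₂) = q₁ / Nat.gcd a q₁ * (q₂ / Nat.gcd a q₂) := by
      rw [hco.gcd_mul a, Nat.div_mul_div_comm hd₁ hd₂]
    have hco' : Nat.Coprime (q₁ / Nat.gcd a q₁) (q₂ / Nat.gcd a q₂) :=
      (hco.coprime_div_left hd₁).coprime_div_right hd₂
    rw [hdiv, ramanujanSum_mul_of_coprime a hco, Nat.totient_mul hco', Nat.totient_mul hco,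
      isMultiplicative_moebius.map_mul_of_coprime hco']
    push_cast
    linear_combination (Nat.totient (q₂ / Nat.gcd a q₂) * ramanujanSum q₂ a : ℤ) * ih₁ +
      (Nat.totient q₁ * μ (q₁ / Nat.gcd a q₁) : ℤ) * ih₂

theorem ramanujanSum_eq_totient_mul_moebius_div {q : ℕ} (a : ℕ) (hq : 0 < q) :
    (ramanujanSum q a : ℚ) =
      Nat.totient q * μ (q / Nat.gcd a q) / Nat.totient (q / Nat.gcd a q) := by
  have hpos : 0 < q / Nat.gcd a q :=
    Nat.div_pos (Nat.gcd_le_right a hq) (Nat.gcd_pos_of_pos_right a hq)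
  have hφ : (Nat.totient (q / Nat.gcd a q) : ℚ) ≠ 0 := by
    exact_mod_cast (Nat.totient_pos.2 hpos).ne'
  rw [eq_div_iff hφ]
  exact_mod_cast ramanujanSum_mul_totient a q

lemma gcd_mul_eq_gcd_mul_gcd_div (ℓ b t : ℕ) :
    Nat.gcd (b * t) ℓ = Nat.gcd ℓ b * Nat.gcd t (ℓ / Nat.gcd ℓ b) := by
  rcases Nat.eq_zero_or_pos (Nat.gcd ℓ b) with hg | hg
  · obtain ⟨rfl, rfl⟩ := Nat.gcd_eq_zero_iff.1 hg
    simp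
  obtain ⟨ℓ', b', hcop, hℓ, hb⟩ := Nat.exists_coprime ℓ b
  have hℓ' : ℓ / Nat.gcd ℓ b = ℓ' := by
    rw [Nat.div_eq_iff_eq_mul_left hg (Nat.gcd_dvd_left ℓ b)]; exact hℓ
  calc Nat.gcd (b * t) ℓ = Nat.gcd (b' * t * Nat.gcd ℓ b) (ℓ' * Nat.gcd ℓ b) := by
        rw [← hℓ, mul_right_comm, ← hb]
    _ = Nat.gcd ℓ b * Nat.gcd t ℓ' := by
        rw [Nat.gcd_mul_right, hcop.symm.gcd_mul_left_cancel, mul_comm]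
    _ = _ := by rw [hℓ']

theorem stmt16_general (ℓ b t : ℕ) :
    (ramanujanSum ℓ (b * t) : ℚ) =
      (Nat.totient ℓ : ℚ) / (Nat.totient (ℓ / Nat.gcd ℓ b) : ℚ) *
        (ramanujanSum (ℓ / Nat.gcd ℓ b) t : ℚ) := by
  rcases Nat.eq_zero_or_pos ℓ with rfl | hℓ
  · simp [ramanujanSum_zero_left]
  set ℓ' := ℓ / Nat.gcd ℓ b
  have hℓ' : 0 < ℓ' := Nat.div_pos (Nat.gcd_le_left b hℓ) (Nat.gcd_pos_of_pos_left b hℓ)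
  have hquot : ℓ / Nat.gcd (b * t) ℓ = ℓ' / Nat.gcd t ℓ' := by
    rw [gcd_mul_eq_gcd_mul_gcd_div, Nat.div_div_eq_div_mul]
  have hφ : (Nat.totient ℓ' : ℚ) ≠ 0 := by exact_mod_cast (Nat.totient_pos.2 hℓ').ne'
  rw [ramanujanSum_eq_totient_mul_moebius_div _ hℓ,
    ramanujanSum_eq_totient_mul_moebius_div _ hℓ', hquot]
  field_simp

/-- (Absorbing extra factors in Ramanujan sums.)
`c_ℓ(bt) = (φ(ℓ)/φ(ℓ/gcd(ℓ,b))) · c_{ℓ/gcd(ℓ,b)}(t)`. -/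
theorem stmt16 (ℓ b t : ℕ) (hℓ : 0 < ℓ) :
    (ramanujanSum ℓ (b * t) : ℚ) =
      (Nat.totient ℓ : ℚ) / (Nat.totient (ℓ / Nat.gcd ℓ b) : ℚ) *
        (ramanujanSum (ℓ / Nat.gcd ℓ b) t : ℚ) :=
  stmt16_general ℓ b t
end

section
/- Fix an odd prime p₀ and define S_{p₀}(d) := ∑_{a | d, a ≡ 1 mod p₀} μ(d/a). If d is coprime to p₀, d > 1, and some prime p dividing d satisfies p ≡ 1 mod p₀, then S_{p₀}(d) = 0. -/
/-!
Substituting `c = d / a`, `S_{p₀}(d) = ∑_{c ∣ d} μ(c) F(c)` with `F(c) = [d / c ≡ 1 mod p₀]`.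
Since `p ≡ 1 mod p₀`, `F(c * p) = F(c)` whenever `c * p ∣ d`. Only squarefree `c` contribute, and
`c ↦ c * p` (for `p ∤ c`) pairs them off with `μ(c * p) = -μ(c)`, so the sum vanishes.
-/

open scoped BigOperators Classical

/-- `S_{p₀}(d) = ∑_{a | d, a ≡ 1 mod p₀} μ(d/a)`. -/
noncomputable def S (p₀ d : ℕ) : ℤ :=
  ∑ a ∈ d.divisors.filter (fun a => a % p₀ = 1), ArithmeticFunction.moebius (d / a)

open Finset
open scoped ArithmeticFunction.Moebius

theorem Squarefree.exists_eq_mul_prime_of_dvd {p c : ℕ} (hc : Squarefree c) (hp : p.Prime)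
    (hpc : p ∣ c) : ∃ c', c = c' * p ∧ ¬p ∣ c' := by
  obtain ⟨c', rfl⟩ := hpc
  rw [mul_comm] at hc ⊢
  exact ⟨c', rfl, hp.coprime_iff_not_dvd.mp (Nat.squarefree_mul_iff.mp hc).1.symm⟩

namespace ArithmeticFunction

theorem moebius_mul_prime {p c : ℕ} (hp : p.Prime) (hpc : ¬p ∣ c) : μ (c * p) = -μ c := by
  rw [isMultiplicative_moebius.map_mul_of_coprime (hp.coprime_iff_not_dvd.mpr hpc).symm,
    moebius_apply_prime hp, mul_neg_one]

theorem sum_divisors_moebius_smul_eq_zero {R : Type*} [AddCommGroup R] {p d : ℕ} (hp : p.Prime)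
    (hpd : p ∣ d) (F : ℕ → R) (hF : ∀ c, c * p ∣ d → F (c * p) = F c) :
    ∑ c ∈ d.divisors, μ c • F c = 0 := by
  rcases eq_or_ne d 0 with rfl | hd
  · simp
  rw [← sum_filter_of_ne (p := Squarefree) fun c _ h => moebius_ne_zero_iff_squarefree.mp
    (left_ne_zero_of_smul h)]
  set D := {c ∈ d.divisors | Squarefree c}
  have mem {c} : c ∈ D ↔ c ∣ d ∧ Squarefree c := by simp [D, hd]
  have split {c} (hc : c ∈ D) : p ∣ c → ∃ c', c = c' * p ∧ ¬p ∣ c' :=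
    (mem.mp hc).2.exists_eq_mul_prime_of_dvd hp
  have mul_mem {c} (hc : c ∈ D) (hpc : ¬p ∣ c) : c * p ∈ D := by
    have hcop := (hp.coprime_iff_not_dvd.mpr hpc).symm
    exact mem.mpr ⟨hcop.mul_dvd_of_dvd_of_dvd (mem.mp hc).1 hpd,
      Nat.squarefree_mul_iff.mpr ⟨hcop, (mem.mp hc).2, hp.prime.squarefree⟩⟩
  have hp0 : 0 < p := hp.pos
  refine sum_involution (fun c _ => if p ∣ c then c / p else c * p) ?_ ?_ ?_ ?_
  · intro c hc
    by_cases hpc : p ∣ c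
    · obtain ⟨c', rfl, hpc'⟩ := split hc hpc
      simp [Nat.mul_div_cancel _ hp0, moebius_mul_prime hp hpc', hF c' (mem.mp hc).1]
    · simp [hpc, moebius_mul_prime hp hpc, hF c (mem.mp (mul_mem hc hpc)).1]
  · intro c hc _ hfix
    by_cases hpc : p ∣ c
    · obtain ⟨c', rfl, hpc'⟩ := split hc hpc
      simp only [hpc, if_true, Nat.mul_div_cancel _ hp0] at hfix
      exact hpc' (hfix ▸ hpc)
    · simp only [hpc, if_false] at hfix
      exact hpc (hfix ▸ dvd_mul_left p c)
  · intro c hc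
    by_cases hpc : p ∣ c
    · obtain ⟨c', rfl, -⟩ := split hc hpc
      simpa [Nat.mul_div_cancel _ hp0, mem] using
        ⟨dvd_of_mul_right_dvd (mem.mp hc).1, (mem.mp hc).2.of_mul_left⟩
    · simpa [hpc] using mul_mem hc hpc
  · intro c hc
    by_cases hpc : p ∣ c
    · obtain ⟨c', rfl, hpc'⟩ := split hc hpc
      simp [Nat.mul_div_cancel _ hp0, hpc']
    · simp [hpc, Nat.mul_div_cancel _ hp0]

end ArithmeticFunction

theorem Nat.mul_mod_eq_of_mod_eq_one {m p n : ℕ} (hp : p % n = 1) : m * p % n = m % n := by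
  rw [Nat.mul_mod, hp, mul_one, Nat.mod_mod]

theorem stmt19_general (p₀ : ℕ)
    (d : ℕ)
    (p : ℕ) (hp : p.Prime) (hpd : p ∣ d) (hp1 : p % p₀ = 1) :
    S p₀ d = 0 := by
  set F : ℕ → ℤ := fun c => if d / c % p₀ = 1 then 1 else 0
  have hF : ∀ c, c * p ∣ d → F (c * p) = F c := by
    intro c hcp
    have hmod : d / c % p₀ = d / c / p % p₀ := by
      conv_lhs => rw [← Nat.div_mul_cancel (Nat.dvd_div_of_mul_dvd hcp)]
      exact Nat.mul_mod_eq_of_mod_eq_one hp1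
    simp only [F, ← Nat.div_div_eq_div_mul, hmod]
  calc S p₀ d = ∑ c ∈ d.divisors, μ c • F c := by
        rw [S, sum_filter, ← Nat.sum_div_divisors]
        refine sum_congr rfl fun c hc => ?_
        rw [Nat.div_div_self (Nat.dvd_of_mem_divisors hc) (Nat.mem_divisors.mp hc).2]
        simp [F]
    _ = 0 := ArithmeticFunction.sum_divisors_moebius_smul_eq_zero hp hpd F hF

/-- For an odd prime `p₀`: if `d > 1` is coprime to `p₀` and some prime `p | d`
satisfies `p ≡ 1 mod p₀`, then `S_{p₀}(d) = 0`. -/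
theorem stmt19 (p₀ : ℕ) (hp₀ : p₀.Prime) (hodd : Odd p₀)
    (d : ℕ) (hd : 1 < d) (hco : Nat.Coprime d p₀)
    (p : ℕ) (hp : p.Prime) (hpd : p ∣ d) (hp1 : p % p₀ = 1) :
    S p₀ d = 0 :=
  stmt19_general p₀ d p hp hpd hp1
end
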